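/- Define binary strings D_0 = "1" and D_{n+1} = "0" ++ D_n ++ D_n, and strings F_1 = "110110", F_2 = "0" ++ F_1, F_{n+1} = "0" ++ F_n ++ F_n for n ≥ 2. Then for all n ≥ 2, F_n = 0^{-1} D_n 0 in the sense that "0" ++ F_n = D_n ++ "0"; consequently the infinite concatenations D_0 D_0 D_1 D_2 D_3 ⋯ and F_1 F_2 F_3 ⋯ are equal as infinite binary sequences. -/
import Mathlib


/-- `D 0 = 1`, `D (n+1) = 0 Dₙ Dₙ`. -/
def D : ℕ → List ℕ
  | 0 => [1]
  | n + 1 => 0 :: (D n ++ D n)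

/-- `F 1 = 110110`, `F 2 = 0 F₁`, `F (n+1) = 0 Fₙ Fₙ` for `n ≥ 2`. -/
def F : ℕ → List ℕ
  | 0 => []
  | 1 => [1, 1, 0, 1, 1, 0]
  | 2 => 0 :: F 1
  | n + 3 => 0 :: (F (n + 2) ++ F (n + 2))

/-- Partial concatenations of `D₀ D₀ D₁ D₂ ⋯`. -/
def sD (n : ℕ) : List ℕ :=
  D 0 ++ D 0 ++ (List.range n).flatMap (fun i => D (i + 1))

/-- Partial concatenations of `F₁ F₂ F₃ ⋯`. -/
def sF (n : ℕ) : List ℕ :=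
  (List.range n).flatMap (fun i => F (i + 1))

lemma key : ∀ n, 2 ≤ n → 0 :: F n = D n ++ [0] := by
  intro n hn
  induction n, hn using Nat.le_induction with
  | base => rfl
  | succ n hn ih =>
    obtain ⟨k, rfl⟩ := Nat.exists_eq_add_of_le' hn
    show 0 :: (0 :: (F (k + 2) ++ F (k + 2))) = (0 :: (D (k + 2) ++ D (k + 2))) ++ [0]
    rw [show (0 : ℕ) :: (F (k + 2) ++ F (k + 2)) = (0 :: F (k + 2)) ++ F (k + 2) from rfl,
      ih]
    simp [ih]

lemma sD_succ (n : ℕ) : sD (n + 1) = sD n ++ D (n + 1) := by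
  simp [sD, List.range_succ]

lemma sF_succ (n : ℕ) : sF (n + 1) = sF n ++ F (n + 1) := by
  simp [sF, List.range_succ]

lemma sD_mono {m m' : ℕ} (h : m ≤ m') : sD m <+: sD m' := by
  induction m', h using Nat.le_induction with
  | base => exact List.prefix_refl _
  | succ n hn ih => exact ih.trans (by rw [sD_succ]; exact List.prefix_append _ _)

lemma sF_mono {m m' : ℕ} (h : m ≤ m') : sF m <+: sF m' := by
  induction m', h using Nat.le_induction with
  | base => exact List.prefix_refl _
  | succ n hn ih => exact ih.trans (by rw [sF_succ]; exact List.prefix_append _ _)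

lemma sF_eq : ∀ m, 1 ≤ m → sF m = sD m ++ [0] := by
  intro m hm
  induction m, hm using Nat.le_induction with
  | base => rfl
  | succ n hn ih =>
    rw [sF_succ, sD_succ, ih, List.append_assoc, List.append_assoc,
      List.singleton_append, key (n + 1) (by omega)]

lemma getD_prefix {l₁ l₂ : List ℕ} (h : l₁ <+: l₂) {k : ℕ} (hk : k < l₁.length) :
    l₁.getD k 0 = l₂.getD k 0 := by
  obtain ⟨t, rfl⟩ := h
  rw [List.getD_append _ _ _ _ hk]

/-- For all `n ≥ 2`, `0 ++ Fₙ = Dₙ ++ 0` (i.e. `Fₙ = 0⁻¹ Dₙ 0`), and consequently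
the infinite concatenations `D₀ D₀ D₁ D₂ ⋯` and `F₁ F₂ F₃ ⋯` agree as infinite
binary sequences. -/
theorem F_eq_shifted_D :
    (∀ n, 2 ≤ n → 0 :: F n = D n ++ [0]) ∧
    (∀ k m m', k < (sD m).length → k < (sF m').length →
      (sD m).getD k 0 = (sF m').getD k 0) := by
  refine ⟨key, ?_⟩
  intro k m m' hm hm'
  rcases Nat.eq_zero_or_pos m' with rfl | hpos
  · simp [sF] at hm'
  set N := max m m' with hN
  have h1 : (sD m).getD k 0 = (sD N).getD k 0 :=
    getD_prefix (sD_mono (le_max_left _ _)) hm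
  have h2 : (sF m').getD k 0 = (sF N).getD k 0 :=
    getD_prefix (sF_mono (le_max_right _ _)) hm'
  have h3 : sF N = sD N ++ [0] := sF_eq N (le_trans hpos (le_max_right _ _))
  have h4 : (sD N).getD k 0 = (sF N).getD k 0 := by
    rw [h3]
    have hk : k < (sD N).length :=
      lt_of_lt_of_le hm (sD_mono (le_max_left _ _)).length_le
    rw [List.getD_append _ _ _ _ hk]
  rw [h1, h2, h4]
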